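/- If τ is a permutation such that P(τ) contains no 213-chain, then P(τ) has a linear extension that avoids the pattern 213. -/

import Mathlib

/-- A permutation of length `n` (a bijection of `{0, …, n-1}`, identified with the
sequence of its values), packaged with its length. -/
abbrev PermSig : Type := Σ n : ℕ, Equiv.Perm (Fin n)

/-- Pattern containment: the permutation `α` of length `k` is contained in the
permutation `τ` of length `n` if there is an increasing choice of positions on which
`τ` is order-isomorphic to `α`. -/
def Contains {k n : ℕ} (α : Equiv.Perm (Fin k)) (τ : Equiv.Perm (Fin n)) : Prop :=
  ∃ f : Fin k ↪o Fin n, ∀ i j : Fin k, α i < α j ↔ τ (f i) < τ (f j)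

/-- The avoidance class `Av B`: all permutations containing no member of `B`. -/
def Av (B : Set PermSig) : Set PermSig :=
  {τ : PermSig | ∀ β ∈ B, ¬ Contains β.2 τ.2}

/-- A pattern class: a set of permutations downward closed under pattern containment. -/
def IsPatternClass (C : Set PermSig) : Prop :=
  ∀ (k n : ℕ) (α : Equiv.Perm (Fin k)) (τ : Equiv.Perm (Fin n)),
    Contains α τ → (⟨n, τ⟩ : PermSig) ∈ C → (⟨k, α⟩ : PermSig) ∈ C

/-- The base relation of the poset `P(τ)` on values: `x ≺ y` whenever `x` appears
before `y` in `τ` and either `x > y`, or some value `z` appears between `x` and `y`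
in `τ` with `x < y < z`. -/
def PQBase {n : ℕ} (τ : Equiv.Perm (Fin n)) (x y : Fin n) : Prop :=
  τ.symm x < τ.symm y ∧
    (y < x ∨ ∃ z : Fin n, τ.symm x < τ.symm z ∧ τ.symm z < τ.symm y ∧ x < y ∧ y < z)

/-- The poset `P(τ)`: the transitive closure of the base relation. -/
def PQ {n : ℕ} (τ : Equiv.Perm (Fin n)) : Fin n → Fin n → Prop :=
  Relation.TransGen (PQBase τ)

/-- `σ` is a linear extension of `P(τ)`; equivalently, `(σ, τ)` is an allowable pair,
i.e. a priority queue can produce output `τ` from input `σ`. -/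
def Allowable {n : ℕ} (σ τ : Equiv.Perm (Fin n)) : Prop :=
  ∀ x y : Fin n, PQ τ x y → σ.symm x < σ.symm y

/-- `C𝒜`: the set of permutations obtainable by a priority queue from an input in `C`. -/
def ImageA (C : Set PermSig) : Set PermSig :=
  {τ : PermSig | ∃ σ : Equiv.Perm (Fin τ.1), (⟨τ.1, σ⟩ : PermSig) ∈ C ∧ Allowable σ τ.2}

/-- `P(τ)` has an `α`-chain: values `a 0 ≺ a 1 ≺ … ≺ a (k-1)` forming a chain of
`P(τ)` whose pattern is `α`. -/
def HasChain {k n : ℕ} (α : Equiv.Perm (Fin k)) (τ : Equiv.Perm (Fin n)) : Prop :=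
  ∃ a : Fin k → Fin n,
    (∀ i j : Fin k, i < j → PQ τ (a i) (a j)) ∧
    (∀ i j : Fin k, a i < a j ↔ α i < α j)

/-- The pattern `213` (written 0-indexed). -/
noncomputable def p213 : Equiv.Perm (Fin 3) :=
  Equiv.ofBijective (![1, 0, 2] : Fin 3 → Fin 3) (by decide)

/-!
The extension is built recursively on a set `S` of values. Let `s = min S` and let `A` be the
set of values of `S` lying weakly above some `P(τ)`-predecessor of `s` in `S`. List `A` first,
then `s`, then the rest `B` of `S`, each of `A` and `B` recursively. Every value of `{s} ∪ B` is
below every value of `A`, and `s` is the minimum of `{s} ∪ B`, so no 213 can be formed across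
the blocks. No `y ∈ {s} ∪ B` precedes `s` in `P(τ)` (it would lie in `A`), and if `y ≺ x` with
`x ∈ A`, pick `w ≺ s` with `w ≤ x`: then `w ≺ y ≺ x` and `y < w ≤ x`, a cycle or a 213-chain.
-/

open scoped List

lemma List.ofFn_comp_sublist {α : Type*} {k n : ℕ} (f : Fin n → α) (e : Fin k ↪o Fin n) :
    List.ofFn (f ∘ e) <+ List.ofFn f := by
  rw [List.sublist_iff_exists_fin_orderEmbedding_get_eq]
  refine ⟨(Fin.castOrderIso List.length_ofFn).toOrderEmbedding.trans
    (e.trans (Fin.castOrderIso List.length_ofFn.symm).toOrderEmbedding), fun i => ?_⟩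
  simp [Fin.cast]

section Avoids213

variable {α : Type*} [Preorder α]

def Avoids213 (L : List α) : Prop :=
  ∀ ⦃x y z : α⦄, [y, x, z] <+ L → x < y → ¬ y < z

lemma avoids213_nil : Avoids213 ([] : List α) := fun _ _ _ h => by simp at h

lemma Avoids213.cons {s : α} {L : List α} (hL : Avoids213 L) (hs : ∀ y ∈ L, s ≤ y) :
    Avoids213 (s :: L) := by
  intro x y z hsub hxy
  rcases List.sublist_cons_iff.1 hsub with hsub | ⟨r, hr, hsub⟩
  · exact hL hsub hxy
  · obtain ⟨rfl, rfl⟩ := List.cons_eq_cons.1 hr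
    exact absurd hxy (not_lt_of_ge (hs x (hsub.subset (by simp))))

lemma Avoids213.append {L₁ L₂ : List α} (h₁ : Avoids213 L₁) (h₂ : Avoids213 L₂)
    (h : ∀ x ∈ L₁, ∀ y ∈ L₂, y < x) : Avoids213 (L₁ ++ L₂) := by
  intro x y z hsub hxy hyz
  obtain ⟨l₁, l₂, hl, hs₁, hs₂⟩ := List.sublist_append_iff.1 hsub
  rcases l₁ with _ | ⟨a, _ | ⟨b, _ | ⟨c, l₁⟩⟩⟩
  · exact h₂ (hl ▸ hs₂) hxy hyz
  · obtain ⟨rfl, rfl⟩ : y = a ∧ [x, z] = l₂ := by simpa using hl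
    exact lt_asymm hyz (h y (hs₁.subset (by simp)) z (hs₂.subset (by simp)))
  · obtain ⟨rfl, rfl, rfl⟩ : y = a ∧ x = b ∧ [z] = l₂ := by simpa using hl
    exact lt_asymm (hxy.trans hyz) (h x (hs₁.subset (by simp)) z (hs₂.subset (by simp)))
  · obtain ⟨rfl, rfl, rfl, rfl, rfl⟩ : y = a ∧ x = b ∧ z = c ∧ l₁ = [] ∧ l₂ = [] := by
      simpa [List.append_eq_nil_iff] using hl
    exact h₁ (by simpa using hs₁) hxy hyz

end Avoids213

section PQ

variable {n : ℕ} {τ : Equiv.Perm (Fin n)} {w x y z s : Fin n}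

lemma PQ.symm_lt (h : PQ τ x y) : τ.symm x < τ.symm y := by
  induction h with
  | single h => exact h.1
  | tail _ h ih => exact ih.trans h.1

lemma PQ.ne (h : PQ τ x y) : x ≠ y := by
  rintro rfl
  exact lt_irrefl _ h.symm_lt

lemma PQ.trans (hxy : PQ τ x y) (hyz : PQ τ y z) : PQ τ x z :=
  Relation.TransGen.trans hxy hyz

lemma PQ.of_symm_lt_of_lt (hpos : τ.symm x < τ.symm y) (hval : y < x) : PQ τ x y :=
  Relation.TransGen.single ⟨hpos, Or.inl hval⟩

lemma symm_lt_of_lt_of_not_pq (hsy : s < y) (hys : ¬ PQ τ y s) : τ.symm s < τ.symm y := by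
  refine lt_of_le_of_ne (not_lt.1 fun hlt => hys (PQ.of_symm_lt_of_lt hlt hsy)) ?_
  exact fun heq => hsy.ne (τ.symm.injective heq)

lemma hasChain_p213_of_pq (h₁ : PQ τ y x) (h₂ : PQ τ x z) (hxy : x < y) (hyz : y < z) :
    HasChain p213 τ := by
  have hxz : x < z := hxy.trans hyz
  refine ⟨![y, x, z], fun i j hij => ?_, fun i j => ?_⟩
  · fin_cases i <;> fin_cases j <;> simp_all [h₁.trans h₂]
  · fin_cases i <;> fin_cases j <;> simp [p213, hxy, hyz, hxz, hxy.le, hyz.le, hxz.le]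

lemma not_pq_of_lt_of_pq (h : ¬ HasChain p213 τ) (hws : PQ τ w s) (hwx : w ≤ x) (hsy : s ≤ y)
    (hys : ¬ PQ τ y s) (hyw : y < w) : ¬ PQ τ y x := by
  have hwy : PQ τ w y := by
    rcases hsy.eq_or_lt with rfl | hsy
    · exact hws
    · exact .of_symm_lt_of_lt (hws.symm_lt.trans (symm_lt_of_lt_of_not_pq hsy hys)) hyw
  intro hyx
  rcases hwx.eq_or_lt with rfl | hwx
  · exact (hwy.trans hyx).ne rfl
  · exact h (hasChain_p213_of_pq hwy hyx hyw hwx)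

end PQ

section UpperPart

variable {n : ℕ} {τ : Equiv.Perm (Fin n)} {S : Finset (Fin n)} {x y s : Fin n}

variable (τ) in
open Classical in
noncomputable def upperPart (S : Finset (Fin n)) (s : Fin n) : Finset (Fin n) :=
  {x ∈ S | ∃ w ∈ S, PQ τ w s ∧ w ≤ x}

open Classical in
lemma mem_upperPart : x ∈ upperPart τ S s ↔ x ∈ S ∧ ∃ w ∈ S, PQ τ w s ∧ w ≤ x :=
  Finset.mem_filter

lemma notMem_upperPart_of_forall_le (hs : ∀ v ∈ S, s ≤ v) : s ∉ upperPart τ S s := by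
  intro hsA
  obtain ⟨-, w, hwS, hws, hwx⟩ := mem_upperPart.1 hsA
  exact hws.ne (le_antisymm hwx (hs w hwS))

lemma lt_of_mem_upperPart (hx : x ∈ upperPart τ S s) (hy : y ∈ S \ upperPart τ S s) :
    y < x := by
  obtain ⟨-, w, hwS, hws, hwx⟩ := mem_upperPart.1 hx
  obtain ⟨hyS, hyA⟩ := Finset.mem_sdiff.1 hy
  by_contra! hxy
  exact hyA (mem_upperPart.2 ⟨hyS, w, hwS, hws, hwx.trans hxy⟩)

lemma not_pq_of_mem_sdiff_upperPart (hy : y ∈ S \ upperPart τ S s) : ¬ PQ τ y s := by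
  intro hys
  obtain ⟨hyS, hyA⟩ := Finset.mem_sdiff.1 hy
  exact hyA (mem_upperPart.2 ⟨hyS, y, hyS, hys, le_rfl⟩)

lemma not_pq_of_mem_upperPart (h : ¬ HasChain p213 τ) (hs : ∀ v ∈ S, s ≤ v)
    (hx : x ∈ upperPart τ S s) (hy : y ∈ S \ upperPart τ S s) : ¬ PQ τ y x := by
  obtain ⟨-, w, hwS, hws, hwx⟩ := mem_upperPart.1 hx
  have hwA : w ∈ upperPart τ S s := mem_upperPart.2 ⟨hwS, w, hwS, hws, le_rfl⟩
  exact not_pq_of_lt_of_pq h hws hwx (hs y (Finset.mem_sdiff.1 hy).1)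
    (not_pq_of_mem_sdiff_upperPart hy) (lt_of_mem_upperPart hwA hy)

end UpperPart

lemma exists_avoids213_pairwise_list {n : ℕ} {τ : Equiv.Perm (Fin n)} (h : ¬ HasChain p213 τ)
    (S : Finset (Fin n)) :
    ∃ L : List (Fin n), L.Nodup ∧ (∀ x, x ∈ L ↔ x ∈ S) ∧
      L.Pairwise (fun x y => ¬ PQ τ y x) ∧ Avoids213 L := by
  induction S using Finset.strongInduction with
  | H S ih =>
  rcases S.eq_empty_or_nonempty with rfl | hS
  · exact ⟨[], List.nodup_nil, by simp, List.Pairwise.nil, avoids213_nil⟩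
  set s := S.min' hS
  have hmin : ∀ v ∈ S, s ≤ v := fun v hv => S.min'_le v hv
  have hs : s ∈ S := S.min'_mem hS
  set A := upperPart τ S s
  have hsA : s ∉ A := notMem_upperPart_of_forall_le hmin
  have hsC : s ∈ S \ A := Finset.mem_sdiff.2 ⟨hs, hsA⟩
  obtain ⟨LA, hndA, hmemA, hpwA, havA⟩ :=
    ih A (Finset.ssubset_iff_subset_ne.2 ⟨fun x hx => (mem_upperPart.1 hx).1,
      fun hAS => hsA (hAS ▸ hs)⟩)
  obtain ⟨LB, hndB, hmemB, hpwB, havB⟩ :=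
    ih ((S \ A).erase s) (lt_of_lt_of_le (Finset.erase_ssubset hsC) Finset.sdiff_subset)
  have hsLB : ∀ y ∈ s :: LB, y ∈ S \ A := by
    rintro y (_ | ⟨_, hy⟩)
    exacts [hsC, Finset.mem_of_mem_erase ((hmemB y).1 hy)]
  have hlt : ∀ x ∈ LA, ∀ y ∈ s :: LB, y < x := fun x hx y hy =>
    lt_of_mem_upperPart ((hmemA x).1 hx) (hsLB y hy)
  refine ⟨LA ++ s :: LB, ?_, ?_, ?_, ?_⟩
  · refine List.nodup_append.2 ⟨hndA, List.nodup_cons.2 ⟨fun hsB => ?_, hndB⟩,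
      fun x hx y hy => (hlt x hx y hy).ne'⟩
    exact Finset.notMem_erase s _ ((hmemB s).1 hsB)
  · intro x
    simp only [List.mem_append, List.mem_cons, hmemA, hmemB, Finset.mem_erase, Finset.mem_sdiff]
    refine ⟨?_, by tauto⟩
    rintro (hx | rfl | ⟨-, hx, -⟩)
    exacts [(mem_upperPart.1 hx).1, hs, hx]
  · refine List.pairwise_append.2 ⟨hpwA, List.pairwise_cons.2 ⟨fun y hy => ?_, hpwB⟩,
      fun x hx y hy => not_pq_of_mem_upperPart h hmin ((hmemA x).1 hx) (hsLB y hy)⟩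
    exact not_pq_of_mem_sdiff_upperPart (hsLB y (.tail _ hy))
  · exact havA.append (havB.cons fun y hy => hmin y (Finset.mem_sdiff.1 (hsLB y (.tail _ hy))).1)
      hlt

lemma exists_perm_ofFn_eq {n : ℕ} {L : List (Fin n)} (hnd : L.Nodup) (hL : ∀ x, x ∈ L) :
    ∃ σ : Equiv.Perm (Fin n), List.ofFn σ = L := by
  have hlen : L.length = n := by simpa using Fintype.card_congr (hnd.getEquivOfForallMemList L hL)
  refine ⟨(finCongr hlen.symm).trans (hnd.getEquivOfForallMemList L hL), ?_⟩
  rw [List.ofFn_congr hlen.symm]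
  simp

lemma allowable_of_pairwise_ofFn {n : ℕ} {σ τ : Equiv.Perm (Fin n)}
    (h : (List.ofFn σ).Pairwise fun x y => ¬ PQ τ y x) : Allowable σ τ := by
  intro x y hxy
  rw [List.pairwise_ofFn] at h
  refine lt_of_le_of_ne (not_lt.1 fun hlt => ?_) fun heq => hxy.ne (σ.symm.injective heq)
  exact absurd hxy (by simpa using h hlt)

lemma not_contains_p213_of_avoids213 {n : ℕ} {σ : Equiv.Perm (Fin n)}
    (h : Avoids213 (List.ofFn σ)) : ¬ Contains p213 σ := by
  rintro ⟨e, he⟩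
  have hsub : [σ (e 0), σ (e 1), σ (e 2)] <+ List.ofFn σ := by
    simpa [List.ofFn_succ] using List.ofFn_comp_sublist σ e
  exact h hsub ((he 1 0).1 (by decide)) ((he 0 2).1 (by decide))

/-- If `P(τ)` contains no `213`-chain then it has a `213`-avoiding linear
extension. -/
theorem no_chain_213_linear_extension {n : ℕ} (τ : Equiv.Perm (Fin n)) (h : ¬ HasChain p213 τ) :
    ∃ σ : Equiv.Perm (Fin n), Allowable σ τ ∧ ¬ Contains p213 σ := by
  obtain ⟨L, hnd, hmem, hpw, hav⟩ := exists_avoids213_pairwise_list h Finset.univ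
  obtain ⟨σ, rfl⟩ := exists_perm_ofFn_eq hnd fun x => (hmem x).2 (Finset.mem_univ x)
  exact ⟨σ, allowable_of_pairwise_ofFn hpw, not_contains_p213_of_avoids213 hav⟩
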